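/- Symmetric types theorem: for every symmetric type S, ⟦S⟧_γ = ⟦S^∪⟧_{γ^∪}, where γ^∪ maps each X to the converse of γ(X). A type is symmetric iff it does not use composition R·R', and every promoted term t either satisfies t =βη I or occurs only in subexpressions of the form t·S·t^∪ (conjugation t⋅⋅S). -/
import Mathlib


namespace RelTT

/-- Untyped lambda terms (de Bruijn indices). -/
inductive Term : Type
  | var : ℕ → Term
  | lam : Term → Term
  | app : Term → Term → Term

namespace Term

/-- Lift free variables ≥ c by one. -/
def lift : Term → ℕ → Term
  | var k, c => if k < c then var k else var (k+1)
  | lam t, c => lam (lift t (c+1))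
  | app t u, c => app (lift t c) (lift u c)

/-- Capture-avoiding substitution of `s` for variable `n`. -/
def subst : Term → ℕ → Term → Term
  | var k, n, s => if k = n then s else if n < k then var (k-1) else var k
  | lam t, n, s => lam (subst t (n+1) (lift s 0))
  | app t u, n, s => app (subst t n s) (subst u n s)

end Term

/-- βη-equivalence of untyped lambda terms. -/
inductive Beq : Term → Term → Prop
  | beta (t u : Term) : Beq (Term.app (Term.lam t) u) (Term.subst t 0 u)
  | eta (t : Term) : Beq (Term.lam (Term.app (Term.lift t 0) (Term.var 0))) t
  | refl (t : Term) : Beq t t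
  | symm {t u} : Beq t u → Beq u t
  | trans {t u v} : Beq t u → Beq u v → Beq t v
  | appCongr {t t' u u'} : Beq t t' → Beq u u' → Beq (Term.app t u) (Term.app t' u')
  | lamCongr {t t'} : Beq t t' → Beq (Term.lam t) (Term.lam t')

/-- Binary relations on terms. -/
abbrev Rel := Term → Term → Prop

/-- A relation is βη-closed iff it respects βη-equivalence on both sides. -/
def BetaEtaClosed (r : Rel) : Prop :=
  ∀ t₁ t₂ t₁' t₂', r t₁ t₂ → Beq t₁' t₁ → Beq t₂' t₂ → r t₁' t₂'

/-- Relational types of RelTT (type variables are de Bruijn indices). -/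
inductive Ty : Type
  | var : ℕ → Ty
  | arrow : Ty → Ty → Ty
  | all : Ty → Ty
  | conv : Ty → Ty
  | comp : Ty → Ty → Ty
  | prom : Term → Ty

/-- Environments map type variables to relations. -/
abbrev Env := ℕ → Rel

def Env.cons (r : Rel) (γ : Env) : Env
  | 0 => r
  | n+1 => γ n

/-- The relational semantics of types. -/
def interp : Ty → Env → Rel
  | Ty.var n, γ => γ n
  | Ty.arrow R R', γ => fun t t' =>
      ∀ a a', interp R γ a a' → interp R' γ (Term.app t a) (Term.app t' a')
  | Ty.all R, γ => fun t t' =>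
      ∀ r : Rel, BetaEtaClosed r → interp R (Env.cons r γ) t t'
  | Ty.conv R, γ => fun t t' => interp R γ t' t
  | Ty.comp R R', γ => fun t t' => ∃ u, interp R γ t u ∧ interp R' γ u t'
  | Ty.prom tm, γ => fun t t' => Beq (Term.app tm t) t'

/-- All relations in the environment are βη-closed. -/
def EnvClosed (γ : Env) : Prop := ∀ n, BetaEtaClosed (γ n)

def I : Term := Term.lam (Term.var 0)
def K : Term := Term.lam (Term.lam (Term.var 1))

/-- Symmetric types: no composition except in conjugations t·S·t^∪, and every
promoted term is βη-equal to I or the conjugating term of a conjugation. -/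
inductive Symm : Ty → Prop
  | var (n) : Symm (Ty.var n)
  | arrow {R R'} : Symm R → Symm R' → Symm (Ty.arrow R R')
  | all {R} : Symm R → Symm (Ty.all R)
  | conv {R} : Symm R → Symm (Ty.conv R)
  | promI {t} : Beq t I → Symm (Ty.prom t)
  | conj (t) {S} : Symm S → Symm (Ty.comp (Ty.prom t) (Ty.comp S (Ty.conv (Ty.prom t))))

/-- Pointwise converse of an environment. -/
def Env.conv (γ : Env) : Env := fun n t t' => γ n t' t

theorem envClosed_cons {r : Rel} {γ : Env} (hr : BetaEtaClosed r) (hγ : EnvClosed γ) :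
    EnvClosed (Env.cons r γ) := by
  intro n; cases n with
  | zero => exact hr
  | succ n => exact hγ n

theorem envClosed_conv {γ : Env} (hγ : EnvClosed γ) : EnvClosed (Env.conv γ) := by
  intro n t₁ t₂ t₁' t₂' h h1 h2
  exact hγ n t₂ t₁ t₂' t₁' h h2 h1

theorem interp_closed (S : Ty) : ∀ γ : Env, EnvClosed γ → BetaEtaClosed (interp S γ) := by
  induction S with
  | var n => intro γ hγ; exact hγ n
  | arrow R R' ih ih' =>
    intro γ hγ t₁ t₂ t₁' t₂' h h1 h2 a a' ha
    exact ih' γ hγ _ _ _ _ (h a a' ha) (Beq.appCongr h1 (Beq.refl a)) (Beq.appCongr h2 (Beq.refl a'))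
  | all R ih =>
    intro γ hγ t₁ t₂ t₁' t₂' h h1 h2 r hr
    exact ih _ (envClosed_cons hr hγ) _ _ _ _ (h r hr) h1 h2
  | conv R ih =>
    intro γ hγ t₁ t₂ t₁' t₂' h h1 h2
    exact ih γ hγ _ _ _ _ h h2 h1
  | comp R R' ih ih' =>
    intro γ hγ t₁ t₂ t₁' t₂' h h1 h2
    obtain ⟨u, hu, hu'⟩ := h
    exact ⟨u, ih γ hγ _ _ _ _ hu h1 (Beq.refl u), ih' γ hγ _ _ _ _ hu' (Beq.refl u) h2⟩
  | prom tm =>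
    intro γ hγ t₁ t₂ t₁' t₂' h h1 h2
    exact Beq.trans (Beq.appCongr (Beq.refl tm) h1) (Beq.trans h h2.symm)

theorem beq_app_I (u : Term) : Beq (Term.app I u) u := by
  have : Term.subst (Term.var 0) 0 u = u := by simp [Term.subst]
  simpa [I, this] using Beq.beta (Term.var 0) u

theorem symm_iff {S : Ty} (hS : Symm S) :
    ∀ γ : Env, EnvClosed γ → ∀ t t', interp S γ t t' ↔ interp S (Env.conv γ) t' t := by
  induction hS with
  | var n => intro γ hγ t t'; exact Iff.rfl
  | arrow hR hR' ih ih' =>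
    intro γ hγ t t'
    constructor
    · intro h a a' ha
      exact (ih' γ hγ _ _).mp (h a' a ((ih γ hγ a' a).mpr ha))
    · intro h a a' ha
      exact (ih' γ hγ _ _).mpr (h a' a ((ih γ hγ a a').mp ha))
  | all hR ih =>
    intro γ hγ t t'
    constructor
    · intro h r hr
      have := (ih (Env.cons (fun a b => r b a) γ)
        (envClosed_cons (fun a b a' b' hab h1 h2 => hr _ _ _ _ hab h2 h1) hγ) t t').mp
        (h _ (fun a b a' b' hab h1 h2 => hr _ _ _ _ hab h2 h1))
      have heq : Env.conv (Env.cons (fun a b => r b a) γ) = Env.cons r (Env.conv γ) := by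
        funext n; cases n <;> rfl
      rwa [heq] at this
    · intro h r hr
      have heq : Env.conv (Env.cons r γ) = Env.cons (fun a b => r b a) (Env.conv γ) := by
        funext n; cases n <;> rfl
      exact (ih _ (envClosed_cons hr hγ) t t').mpr
        (heq ▸ h _ (fun a b a' b' hab h1 h2 => hr _ _ _ _ hab h2 h1))
  | conv hR ih =>
    intro γ hγ t t'
    exact ih γ hγ t' t
  | promI htI =>
    rename_i tm
    intro γ hγ t t'
    have key : ∀ a b : Term, Beq (Term.app tm a) b ↔ Beq a b := by
      intro a b
      constructor
      · intro h
        exact Beq.trans (Beq.trans (Beq.symm (beq_app_I a)) (Beq.appCongr (Beq.symm htI) (Beq.refl a))) h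
      · intro h
        exact Beq.trans (Beq.appCongr htI (Beq.refl a)) (Beq.trans (beq_app_I a) h)
    simp only [interp, key]
    exact ⟨Beq.symm, Beq.symm⟩
  | conj tm hSin ih =>
    intro γ hγ t t'
    rename_i S'
    have hc := interp_closed S' γ hγ
    have hc' := interp_closed S' (Env.conv γ) (envClosed_conv hγ)
    constructor
    · rintro ⟨u, hu, v, hv, hv'⟩
      refine ⟨Term.app tm t', Beq.refl _, Term.app tm t, ?_, Beq.refl _⟩
      exact (ih γ hγ _ _).mp (hc _ _ _ _ hv hu hv')
    · rintro ⟨u, hu, v, hv, hv'⟩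
      refine ⟨Term.app tm t, Beq.refl _, Term.app tm t', ?_, Beq.refl _⟩
      exact hc _ _ _ _ ((ih γ hγ _ _).mpr hv) hv' hu

/-- Symmetric types: ⟦S⟧_γ = ⟦S^∪⟧_{γ^∪}. -/
theorem symmetric_types (S : Ty) (hS : Symm S) (γ : Env) (hγ : EnvClosed γ) :
    interp S γ = interp (Ty.conv S) (Env.conv γ) := by
  funext t t'
  exact propext (symm_iff hS γ hγ t t')

end RelTT
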